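/- arXiv:2005.00210 — 4 statements merged into one kernel-verified Lean document; each statement's English description precedes it below -/
import Mathlib

section
/- For a normed space E, the order interval [-u, u] in OU(E) with u = (0,1) equals {(x,y) ∈ E × ℝ : ‖x‖ + |y| ≤ 1}, so the order-unit norm on OU(E) is ‖(x,y)‖ = ‖x‖ + |y|, the ℓ¹ direct sum norm on E ⊕₁ ℝ. -/
/-- The positive cone of the order-unit space `OU(E)` on `E × ℝ`. -/
def OUcone (E : Type*) [NormedAddCommGroup E] : Set (E × ℝ) := {p | ‖p.1‖ ≤ p.2}

lemma ousett_eq {E : Type*} [NormedAddCommGroup E] [NormedSpace ℝ E] :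
    ({z : E × ℝ | z + ((0 : E), (1 : ℝ)) ∈ OUcone E ∧ ((0 : E), (1 : ℝ)) - z ∈ OUcone E} =
      {z : E × ℝ | ‖z.1‖ + |z.2| ≤ 1}) := by
  ext ⟨x, y⟩
  simp only [OUcone, Set.mem_setOf_eq, Prod.mk_add_mk, Prod.fst_add, Prod.snd_add,
    Prod.fst_sub, Prod.snd_sub, Prod.fst, Prod.snd, add_zero, zero_sub, norm_neg]
  constructor
  · rintro ⟨h1, h2⟩
    rcases abs_cases y with ⟨h, _⟩ | ⟨h, _⟩ <;> rw [h] <;> linarith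
  · intro h
    have := abs_nonneg y
    constructor <;> [skip; skip] <;>
      rcases abs_cases y with ⟨h', _⟩ | ⟨h', _⟩ <;> linarith [h' ▸ h]

lemma ouballl_eq {E : Type*} [NormedAddCommGroup E] [NormedSpace ℝ E] :
    (WithLp.toLp 1 ⁻¹' Metric.closedBall (0 : WithLp 1 (E × ℝ)) 1 : Set (E × ℝ)) =
      ({z : E × ℝ | ‖z.1‖ + |z.2| ≤ 1} : Set (E × ℝ)) := by
  ext z
  have hn : ‖WithLp.toLp 1 z‖ = ‖z.1‖ + |z.2| := by
    rw [WithLp.prod_norm_eq_add (by norm_num : 0 < (1 : ENNReal).toReal)]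
    simp [Real.norm_eq_abs]
  simp only [Set.mem_preimage, Metric.mem_closedBall, dist_zero_right, hn, Set.mem_setOf_eq]

/-- The order interval `[-u, u]` for `u = (0,1)` in `OU(E)` equals
`{(x,y) : ‖x‖ + |y| ≤ 1}`, so the order-unit norm (the Minkowski functional of
`[-u,u]`) is the ℓ¹ direct sum norm `‖x‖ + |y|`. -/
theorem stmt_8 {E : Type*} [NormedAddCommGroup E] [NormedSpace ℝ E] :
    ({z : E × ℝ | z + ((0 : E), (1 : ℝ)) ∈ OUcone E ∧ ((0 : E), (1 : ℝ)) - z ∈ OUcone E} =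
      {z : E × ℝ | ‖z.1‖ + |z.2| ≤ 1}) ∧
    (∀ z : E × ℝ,
      gauge {w : E × ℝ | w + ((0 : E), (1 : ℝ)) ∈ OUcone E ∧
        ((0 : E), (1 : ℝ)) - w ∈ OUcone E} z = ‖z.1‖ + |z.2|) := by
  refine ⟨ousett_eq, fun z => ?_⟩
  rw [ousett_eq, ← ouballl_eq]
  have hg : gauge (WithLp.toLp 1 ⁻¹' Metric.closedBall (0 : WithLp 1 (E × ℝ)) 1) z =
      gauge (Metric.closedBall (0 : WithLp 1 (E × ℝ)) 1) (WithLp.toLp 1 z) := by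
    simp only [gauge]
    congr 1
    ext r
    simp only [Set.mem_setOf_eq]
    exact and_congr_right fun hr => by
      rw [Set.mem_smul_set_iff_inv_smul_mem₀ hr.ne', Set.mem_smul_set_iff_inv_smul_mem₀ hr.ne',
        Set.mem_preimage, WithLp.toLp_smul]
  rw [hg]
  have h1 := gauge_closedBall (E := WithLp 1 (E × ℝ)) (zero_le_one) (x := WithLp.toLp 1 z)
  rw [div_one] at h1
  have hn : (‖z.1‖ + |z.2| : ℝ) = ‖(WithLp.toLp 1 z : WithLp 1 (E × ℝ))‖ := by
    rw [WithLp.prod_norm_eq_add (by norm_num : 0 < (1 : ENNReal).toReal)]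
    simp [Real.norm_eq_abs]
  rw [hn]
  exact h1
end

section
/- Let E be a normed space and a : Ball(E) → ℝ a bounded affine map with a(0) = 0. Then a extends uniquely to a bounded linear functional ψ : E → ℝ. -/
/-- A bounded affine map `a` on the closed unit ball of a normed space with `a 0 = 0`
extends uniquely to a bounded linear functional. -/
theorem stmt_9 {E : Type*} [NormedAddCommGroup E] [NormedSpace ℝ E] (a : E → ℝ)
    (haff : ∀ x ∈ Metric.closedBall (0 : E) 1, ∀ y ∈ Metric.closedBall (0 : E) 1,
      ∀ t : ℝ, 0 ≤ t → t ≤ 1 → a (t • x + (1 - t) • y) = t * a x + (1 - t) * a y)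
    (hbdd : ∃ M : ℝ, ∀ x ∈ Metric.closedBall (0 : E) 1, |a x| ≤ M)
    (h0 : a 0 = 0) :
    ∃! ψ : E →L[ℝ] ℝ, ∀ x ∈ Metric.closedBall (0 : E) 1, ψ x = a x := by
  obtain ⟨M, hM⟩ := hbdd
  have mem : ∀ x : E, ‖x‖ ≤ 1 → x ∈ Metric.closedBall (0 : E) 1 := by
    intro x hx; simpa [mem_closedBall_zero_iff] using hx
  have hom : ∀ x : E, ‖x‖ ≤ 1 → ∀ t : ℝ, 0 ≤ t → t ≤ 1 → a (t • x) = t * a x := by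
    intro x hx t ht ht1
    have := haff x (mem x hx) 0 (mem 0 (by simp)) t ht ht1
    simpa [h0] using this
  have hneg : ∀ z : E, ‖z‖ ≤ 1 → a (-z) = - a z := by
    intro z hz
    have := haff z (mem z hz) (-z) (mem (-z) (by simpa using hz)) (1/2) (by norm_num) (by norm_num)
    have heq : (1/2 : ℝ) • z + (1 - 1/2 : ℝ) • (-z) = 0 := by
      module
    rw [heq, h0] at this
    linarith
  set f : E → ℝ := fun x => (‖x‖ + 1) * a ((‖x‖ + 1)⁻¹ • x) with hf
  have key : ∀ (x : E) (c d : ℝ), 0 < c → c ≤ d → ‖x‖ ≤ c →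
      d * a (d⁻¹ • x) = c * a (c⁻¹ • x) := by
    intro x c d hc hcd hxc
    have hd : 0 < d := lt_of_lt_of_le hc hcd
    have hball : ‖c⁻¹ • x‖ ≤ 1 := by
      rw [norm_smul, norm_inv, Real.norm_eq_abs, abs_of_pos hc]
      rw [inv_mul_le_iff₀ hc]; simpa using hxc
    have h1 := hom (c⁻¹ • x) hball (c/d) (by positivity) (by rw [div_le_one hd]; exact hcd)
    have heq : (c/d) • (c⁻¹ • x) = d⁻¹ • x := by
      rw [smul_smul]; congr 1; field_simp; try ring
    rw [heq] at h1
    rw [h1]; field_simp; try ring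
  have fval : ∀ (x : E) (c : ℝ), 0 < c → ‖x‖ ≤ c → f x = c * a (c⁻¹ • x) := by
    intro x c hc hxc
    by_cases h : c ≤ ‖x‖ + 1
    · exact key x c (‖x‖ + 1) hc h hxc
    · exact (key x (‖x‖ + 1) c (by positivity) (le_of_not_ge h)
        (by linarith)).symm
  have hballc : ∀ (x : E) (c : ℝ), 0 < c → ‖x‖ ≤ c → ‖c⁻¹ • x‖ ≤ 1 := by
    intro x c hc hxc
    rw [norm_smul, norm_inv, Real.norm_eq_abs, abs_of_pos hc, inv_mul_le_iff₀ hc]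
    simpa using hxc
  have fadd : ∀ x y : E, f (x + y) = f x + f y := by
    intro x y
    set c : ℝ := ‖x‖ + ‖y‖ + 1 with hcdef
    have hc0 : 0 < c := by positivity
    have hx0 := norm_nonneg x
    have hy0 := norm_nonneg y
    have h1 : f (x + y) = (2*c) * a ((2*c)⁻¹ • (x + y)) :=
      fval _ _ (by positivity) (by have := norm_add_le x y; linarith)
    have hx : f x = c * a (c⁻¹ • x) := fval _ _ hc0 (by linarith)
    have hy : f y = c * a (c⁻¹ • y) := fval _ _ hc0 (by linarith)
    have h2 := haff (c⁻¹ • x) (mem _ (hballc x c hc0 (by linarith)))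
      (c⁻¹ • y) (mem _ (hballc y c hc0 (by linarith))) (1/2) (by norm_num) (by norm_num)
    have heq : (1/2 : ℝ) • (c⁻¹ • x) + (1 - 1/2 : ℝ) • (c⁻¹ • y) = (2*c)⁻¹ • (x + y) := by
      have hc' : c ≠ 0 := ne_of_gt hc0
      have h : (2*c)⁻¹ = (1/2) * c⁻¹ := by rw [mul_inv]; ring
      rw [smul_add, smul_smul, smul_smul, h]
      norm_num
    rw [heq] at h2
    rw [h1, h2, hx, hy]; ring
  have fsmul_pos : ∀ (t : ℝ), 0 < t → ∀ x : E, f (t • x) = t * f x := by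
    intro t ht x
    have hc0 : (0:ℝ) < ‖x‖ + 1 := by positivity
    have h1 : f (t • x) = (t * (‖x‖ + 1)) * a ((t * (‖x‖ + 1))⁻¹ • (t • x)) :=
      fval _ _ (by positivity) (by
        rw [norm_smul, Real.norm_eq_abs, abs_of_pos ht]
        have := norm_nonneg x
        nlinarith)
    have heq : (t * (‖x‖ + 1))⁻¹ • (t • x) = (‖x‖ + 1)⁻¹ • x := by
      rw [smul_smul]; congr 1; field_simp; try ring
    rw [heq] at h1
    rw [h1, fval x (‖x‖ + 1) hc0 (by linarith)]; ring
  have fneg : ∀ x : E, f (-x) = - f x := by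
    intro x
    have hc0 : (0:ℝ) < ‖x‖ + 1 := by positivity
    have h1 : f (-x) = (‖x‖ + 1) * a ((‖x‖ + 1)⁻¹ • (-x)) := by
      have := fval (-x) (‖x‖ + 1) hc0 (by simp)
      simpa using this
    rw [h1, smul_neg, hneg _ (hballc x _ hc0 (by linarith)),
      fval x (‖x‖ + 1) hc0 (by linarith)]
    ring
  have f0 : f 0 = 0 := by simp [hf, h0]
  have fsmul : ∀ (t : ℝ) (x : E), f (t • x) = t * f x := by
    intro t x
    rcases lt_trichotomy t 0 with ht | ht | ht
    · have : f (t • x) = f (-((-t) • x)) := by congr 1; module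
      rw [this, fneg, fsmul_pos (-t) (by linarith) x]; ring
    · subst ht; simp [f0]
    · exact fsmul_pos t ht x
  set L : E →ₗ[ℝ] ℝ :=
    { toFun := f, map_add' := fadd, map_smul' := fsmul } with hL
  have hbound : ∀ x : E, ‖L x‖ ≤ M * ‖x‖ := by
    intro x
    by_cases hx : x = 0
    · simp [hx, hL, f0]
    · have hx0 : (0:ℝ) < ‖x‖ := norm_pos_iff.mpr hx
      have h1 : f x = ‖x‖ * a (‖x‖⁻¹ • x) := fval x ‖x‖ hx0 le_rfl
      have h2 : |a (‖x‖⁻¹ • x)| ≤ M := hM _ (mem _ (hballc x ‖x‖ hx0 le_rfl))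
      have : ‖L x‖ = ‖x‖ * |a (‖x‖⁻¹ • x)| := by
        simp only [hL, LinearMap.coe_mk, AddHom.coe_mk]
        rw [h1, Real.norm_eq_abs, abs_mul, abs_of_pos hx0]
      rw [this]
      calc ‖x‖ * |a (‖x‖⁻¹ • x)| ≤ ‖x‖ * M := by
            exact mul_le_mul_of_nonneg_left h2 (le_of_lt hx0)
        _ = M * ‖x‖ := mul_comm _ _
  set ψ : E →L[ℝ] ℝ := LinearMap.mkContinuous L M hbound with hψ
  have hψval : ∀ x : E, ψ x = f x := fun x => rfl
  have hagree : ∀ x ∈ Metric.closedBall (0 : E) 1, ψ x = a x := by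
    intro x hx
    rw [hψval]
    have h1 : f x = 1 * a ((1:ℝ)⁻¹ • x) :=
      fval x 1 one_pos (by simpa [mem_closedBall_zero_iff] using hx)
    simpa using h1
  refine ⟨ψ, hagree, ?_⟩
  intro ψ' hψ'
  ext x
  have hc0 : (0:ℝ) < ‖x‖ + 1 := by positivity
  have hxball : (‖x‖ + 1)⁻¹ • x ∈ Metric.closedBall (0 : E) 1 :=
    mem _ (hballc x _ hc0 (by linarith))
  have hxe : (‖x‖ + 1) • ((‖x‖ + 1)⁻¹ • x) = x := by
    rw [smul_smul]; rw [mul_inv_cancel₀ (ne_of_gt hc0)]; simp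
  calc ψ' x = ψ' ((‖x‖ + 1) • ((‖x‖ + 1)⁻¹ • x)) := by rw [hxe]
    _ = (‖x‖ + 1) * ψ' ((‖x‖ + 1)⁻¹ • x) := by rw [map_smul]; simp
    _ = (‖x‖ + 1) * a ((‖x‖ + 1)⁻¹ • x) := by rw [hψ' _ hxball]
    _ = (‖x‖ + 1) * ψ ((‖x‖ + 1)⁻¹ • x) := by rw [hagree _ hxball]
    _ = ψ ((‖x‖ + 1) • ((‖x‖ + 1)⁻¹ • x)) := by rw [map_smul]; simp
    _ = ψ x := by rw [hxe]
end

section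
/- Every state φ on OU(E*) is Scott-continuous: for every directed set (yᵢ,μᵢ) in OU(E*) = E* × ℝ (ordered by the cone {(y,μ) : ‖y‖ ≤ μ}) with supremum (y,μ), one has sup φ(yᵢ,μᵢ) = φ(y,μ). In fact, any directed set with supremum (y,μ) in this order converges to (y,μ) in the ℓ¹ direct sum norm on E* ⊕₁ ℝ. -/
/-- The order on `OU(E*) = E* × ℝ` induced by the cone `{(y,μ) : ‖y‖ ≤ μ}`. -/
def OUle {E : Type*} [NormedAddCommGroup E] [NormedSpace ℝ E]
    (a b : (E →L[ℝ] ℝ) × ℝ) : Prop := ‖b.1 - a.1‖ ≤ b.2 - a.2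

/-- Every state `φ` on `OU(E*)` is Scott-continuous: for any nonempty directed set `D`
with supremum `s`, `sup φ(D) = φ(s)`; in fact any directed set with supremum `s`
converges to `s` as a net in the ℓ¹ direct sum norm on `E* ⊕₁ ℝ`. -/
theorem stmt_12 {E : Type*} [NormedAddCommGroup E] [NormedSpace ℝ E]
    (φ : ((E →L[ℝ] ℝ) × ℝ) →ₗ[ℝ] ℝ)
    (hpos : ∀ a : (E →L[ℝ] ℝ) × ℝ, ‖a.1‖ ≤ a.2 → 0 ≤ φ a)
    (hstate : φ ((0 : E →L[ℝ] ℝ), (1 : ℝ)) = 1)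
    (D : Set ((E →L[ℝ] ℝ) × ℝ)) (hne : D.Nonempty)
    (hdir : ∀ a ∈ D, ∀ b ∈ D, ∃ c ∈ D, OUle a c ∧ OUle b c)
    (s : (E →L[ℝ] ℝ) × ℝ)
    (hub : ∀ a ∈ D, OUle a s)
    (hlub : ∀ b : (E →L[ℝ] ℝ) × ℝ, (∀ a ∈ D, OUle a b) → OUle s b) :
    sSup (φ '' D) = φ s ∧
    (∀ ε : ℝ, 0 < ε → ∃ a ∈ D, ∀ b ∈ D, OUle a b →
      ‖s.1 - b.1‖ + |s.2 - b.2| < ε) := by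
  classical
  -- second coordinates are bounded by s.2
  have hsnd_le : ∀ a ∈ D, a.2 ≤ s.2 := by
    intro a ha
    have h : ‖s.1 - a.1‖ ≤ s.2 - a.2 := hub a ha
    have h0 : (0:ℝ) ≤ ‖s.1 - a.1‖ := norm_nonneg _
    linarith
  set T : Set ℝ := Prod.snd '' D with hT
  have hTne : T.Nonempty := hne.image _
  have hTbdd : BddAbove T := ⟨s.2, by rintro x ⟨a, ha, rfl⟩; exact hsnd_le a ha⟩
  set t : ℝ := sSup T with ht
  have hat : ∀ a ∈ D, a.2 ≤ t := fun a ha => le_csSup hTbdd ⟨a, ha, rfl⟩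
  -- choose an approximating sequence
  have hseq : ∀ n : ℕ, ∃ a, a ∈ D ∧ t - 1/(n+1) < a.2 := by
    intro n
    have hlt : t - 1/((n:ℝ)+1) < t := by
      have : (0:ℝ) < 1/((n:ℝ)+1) := by positivity
      linarith
    obtain ⟨x, hx, hxt⟩ := exists_lt_of_lt_csSup hTne hlt
    obtain ⟨a, ha, rfl⟩ := hx
    exact ⟨a, ha, hxt⟩
  choose f hfD hft using hseq
  -- distance bound between elements of D
  have hdist : ∀ a ∈ D, ∀ b ∈ D, ‖a.1 - b.1‖ ≤ (t - a.2) + (t - b.2) := by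
    intro a ha b hb
    obtain ⟨c, hc, hac, hbc⟩ := hdir a ha b hb
    have h1 : ‖c.1 - a.1‖ ≤ c.2 - a.2 := hac
    have h2 : ‖c.1 - b.1‖ ≤ c.2 - b.2 := hbc
    have hct := hat c hc
    have heq : a.1 - b.1 = (c.1 - b.1) - (c.1 - a.1) := by abel
    calc ‖a.1 - b.1‖ = ‖(c.1 - b.1) - (c.1 - a.1)‖ := by rw [heq]
      _ ≤ ‖c.1 - b.1‖ + ‖c.1 - a.1‖ := norm_sub_le _ _
      _ ≤ (t - a.2) + (t - b.2) := by linarith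
  -- the first coordinates of the sequence form a Cauchy sequence
  have hcau : CauchySeq (fun n => (f n).1) := by
    apply cauchySeq_of_le_tendsto_0 (fun N : ℕ => 2/((N:ℝ)+1))
    · intro n m N hn hm
      have h := hdist (f n) (hfD n) (f m) (hfD m)
      have h1 := hft n
      have h2 := hft m
      have hn' : 1/((n:ℝ)+1) ≤ 1/((N:ℝ)+1) := by
        apply one_div_le_one_div_of_le (by positivity)
        have : (N:ℝ) ≤ n := by exact_mod_cast hn
        linarith
      have hm' : 1/((m:ℝ)+1) ≤ 1/((N:ℝ)+1) := by
        apply one_div_le_one_div_of_le (by positivity)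
        have : (N:ℝ) ≤ m := by exact_mod_cast hm
        linarith
      have h2N : 2/((N:ℝ)+1) = 1/((N:ℝ)+1) + 1/((N:ℝ)+1) := by ring
      rw [dist_eq_norm, h2N]
      linarith
    · have h : Filter.Tendsto (fun n : ℕ => 1/((n:ℝ)+1)) Filter.atTop (nhds 0) :=
        tendsto_one_div_add_atTop_nhds_zero_nat
      have h2 : Filter.Tendsto (fun n : ℕ => 2 * (1/((n:ℝ)+1))) Filter.atTop (nhds (2*0)) :=
        h.const_mul 2
      simpa [mul_one_div, div_eq_mul_inv] using h2
  obtain ⟨y, hy⟩ := cauchySeq_tendsto_of_complete hcau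
  have hnormy : Filter.Tendsto (fun n => ‖y - (f n).1‖) Filter.atTop (nhds 0) := by
    have := ((tendsto_const_nhds (x := y)).sub hy).norm
    simpa using this
  -- (y, t) is an upper bound for D
  have hyub : ∀ a ∈ D, ‖y - a.1‖ ≤ t - a.2 := by
    intro a ha
    have hlim : Filter.Tendsto (fun n : ℕ => ‖y - (f n).1‖ + 1/((n:ℝ)+1) + (t - a.2))
        Filter.atTop (nhds (t - a.2)) := by
      have := (hnormy.add tendsto_one_div_add_atTop_nhds_zero_nat).add
        (tendsto_const_nhds (x := t - a.2))
      simpa using this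
    refine ge_of_tendsto hlim (Filter.Eventually.of_forall ?_)
    intro n
    obtain ⟨c, hc, hac, hfc⟩ := hdir a ha (f n) (hfD n)
    have h1 : ‖c.1 - a.1‖ ≤ c.2 - a.2 := hac
    have h2 : ‖c.1 - (f n).1‖ ≤ c.2 - (f n).2 := hfc
    have hct := hat c hc
    have h3 := hft n
    have heq : y - a.1 = (y - (f n).1) + ((f n).1 - c.1) + (c.1 - a.1) := by abel
    have htri : ‖y - a.1‖ ≤ ‖y - (f n).1‖ + ‖(f n).1 - c.1‖ + ‖c.1 - a.1‖ := by
      rw [heq]; exact norm_add₃_le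
    have h4 : ‖(f n).1 - c.1‖ = ‖c.1 - (f n).1‖ := norm_sub_rev _ _
    rw [h4] at htri
    linarith
  -- hence t = s.2
  have hts : t = s.2 := by
    have h : ‖y - s.1‖ ≤ t - s.2 := hlub (y, t) (fun a ha => hyub a ha)
    have ht_le : t ≤ s.2 := csSup_le hTne (by rintro x ⟨a, ha, rfl⟩; exact hsnd_le a ha)
    have h0 := norm_nonneg (y - s.1)
    linarith
  -- the convergence statement
  have hconv : ∀ ε : ℝ, 0 < ε → ∃ a ∈ D, ∀ b ∈ D, OUle a b →
      ‖s.1 - b.1‖ + |s.2 - b.2| < ε := by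
    intro ε hε
    obtain ⟨n, hn⟩ := exists_nat_one_div_lt (show (0:ℝ) < ε/2 by linarith)
    refine ⟨f n, hfD n, ?_⟩
    intro b hb hab
    have h1 : ‖b.1 - (f n).1‖ ≤ b.2 - (f n).2 := hab
    have h2 : ‖s.1 - b.1‖ ≤ s.2 - b.2 := hub b hb
    have h3 := hft n
    rw [hts] at h3
    have h4 : (f n).2 ≤ b.2 := by
      have := norm_nonneg (b.1 - (f n).1); linarith
    have h5 : b.2 ≤ s.2 := hsnd_le b hb
    have habs : |s.2 - b.2| = s.2 - b.2 := abs_of_nonneg (by linarith)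
    rw [habs]
    linarith
  -- φ of (0, c)
  have hzero : ∀ c : ℝ, φ ((0 : E →L[ℝ] ℝ), c) = c := by
    intro c
    have hc : ((0 : E →L[ℝ] ℝ), c) = c • ((0 : E →L[ℝ] ℝ), (1:ℝ)) := by
      simp [Prod.smul_def]
    rw [hc, map_smul, hstate, smul_eq_mul, mul_one]
  -- monotonicity of φ
  have hmono : ∀ a b : (E →L[ℝ] ℝ) × ℝ, OUle a b → φ a ≤ φ b := by
    intro a b h
    have h' : ‖(b - a).1‖ ≤ (b - a).2 := by
      simpa [OUle] using h
    have := hpos (b - a) h'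
    rw [map_sub] at this
    linarith
  -- bound : φ x ≤ x.2 + ‖x.1‖
  have hbnd : ∀ x : (E →L[ℝ] ℝ) × ℝ, φ x ≤ x.2 + ‖x.1‖ := by
    intro x
    have h' : ‖(((0 : E →L[ℝ] ℝ), x.2 + ‖x.1‖) - x).1‖ ≤ (((0 : E →L[ℝ] ℝ), x.2 + ‖x.1‖) - x).2 := by
      simp
    have h := hpos _ h'
    rw [map_sub, hzero] at h
    linarith
  have hbddφ : BddAbove (φ '' D) := by
    refine ⟨φ s, ?_⟩
    rintro x ⟨a, ha, rfl⟩
    exact hmono a s (hub a ha)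
  constructor
  · apply le_antisymm
    · apply csSup_le (hne.image _)
      rintro x ⟨a, ha, rfl⟩
      exact hmono a s (hub a ha)
    · by_contra h
      push_neg at h
      obtain ⟨a, ha, hab⟩ := hconv (φ s - sSup (φ '' D)) (by linarith)
      have haa : OUle a a := by
        show ‖a.1 - a.1‖ ≤ a.2 - a.2; simp
      have h1 := hab a ha haa
      have h2 : φ s - φ a ≤ (s.2 - a.2) + ‖s.1 - a.1‖ := by
        have hb := hbnd (s - a)
        rw [map_sub] at hb
        simpa using hb
      have h3 : φ a ≤ sSup (φ '' D) := le_csSup hbddφ ⟨a, ha, rfl⟩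
      have h4 : s.2 - a.2 ≤ |s.2 - a.2| := le_abs_self _
      linarith
  · exact hconv
end

section
/- In the order-unit space OU(E*) = E* × ℝ ordered by the cone {(y,μ) : ‖y‖_{E*} ≤ μ}, if (yᵢ,μᵢ) is a directed set with supremum (y,μ), then ‖y - yⱼ‖ ≤ μ - μⱼ for all j, and μⱼ converges to μ (hence yⱼ → y in norm). -/
/-- If `D` is a nonempty directed set in `OU(E*) = E* × ℝ` with supremum `s = (y,μ)`,
then `‖y - yⱼ‖ ≤ μ - μⱼ` for all `(yⱼ,μⱼ) ∈ D`, and `μⱼ → μ` (hence `yⱼ → y` in norm)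
as a net over the directed set. -/
theorem stmt_13 {E : Type*} [NormedAddCommGroup E] [NormedSpace ℝ E]
    (D : Set ((E →L[ℝ] ℝ) × ℝ)) (hne : D.Nonempty)
    (hdir : ∀ a ∈ D, ∀ b ∈ D, ∃ c ∈ D, OUle a c ∧ OUle b c)
    (s : (E →L[ℝ] ℝ) × ℝ)
    (hub : ∀ a ∈ D, OUle a s)
    (hlub : ∀ b : (E →L[ℝ] ℝ) × ℝ, (∀ a ∈ D, OUle a b) → OUle s b) :
    (∀ b ∈ D, ‖s.1 - b.1‖ ≤ s.2 - b.2) ∧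
    (∀ ε : ℝ, 0 < ε → ∃ a ∈ D, ∀ b ∈ D, OUle a b → |s.2 - b.2| < ε) ∧
    (∀ ε : ℝ, 0 < ε → ∃ a ∈ D, ∀ b ∈ D, OUle a b → ‖s.1 - b.1‖ < ε) := by
  have hub1 : ∀ b ∈ D, ‖s.1 - b.1‖ ≤ s.2 - b.2 := fun b hb => hub b hb
  set T : Set ℝ := Prod.snd '' D with hT
  have hTne : T.Nonempty := hne.image _
  have hTbdd : BddAbove T := by
    refine ⟨s.2, ?_⟩
    rintro x ⟨a, ha, rfl⟩
    have h := hub1 a ha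
    have h0 : (0:ℝ) ≤ ‖s.1 - a.1‖ := norm_nonneg _
    linarith
  set t := sSup T with ht
  have hle_t : ∀ a ∈ D, a.2 ≤ t := fun a ha => le_csSup hTbdd ⟨a, ha, rfl⟩
  have hts : t ≤ s.2 := by
    apply csSup_le hTne
    rintro x ⟨a, ha, rfl⟩
    have h := hub1 a ha
    have h0 : (0:ℝ) ≤ ‖s.1 - a.1‖ := norm_nonneg _
    linarith
  -- key triangle inequality from directedness
  have key : ∀ a ∈ D, ∀ b ∈ D, ‖a.1 - b.1‖ ≤ (t - a.2) + (t - b.2) := by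
    intro a ha b hb
    obtain ⟨c, hc, hac, hbc⟩ := hdir a ha b hb
    have h1 : ‖c.1 - a.1‖ ≤ c.2 - a.2 := hac
    have h2 : ‖c.1 - b.1‖ ≤ c.2 - b.2 := hbc
    have h3 : c.2 ≤ t := hle_t c hc
    have heq : a.1 - b.1 = (c.1 - b.1) - (c.1 - a.1) := by abel
    calc ‖a.1 - b.1‖ = ‖(c.1 - b.1) - (c.1 - a.1)‖ := by rw [heq]
      _ ≤ ‖c.1 - b.1‖ + ‖c.1 - a.1‖ := norm_sub_le _ _
      _ ≤ (t - a.2) + (t - b.2) := by linarith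
  -- choose an almost-sup sequence
  have hseq : ∀ n : ℕ, ∃ a ∈ D, t - 1/(n+1) < a.2 := by
    intro n
    have hpos : (0:ℝ) < 1/(n+1) := by positivity
    obtain ⟨x, hx, hx2⟩ := exists_lt_of_lt_csSup hTne (by linarith : t - 1/(n+1) < t)
    obtain ⟨a, ha, rfl⟩ := hx
    exact ⟨a, ha, hx2⟩
  choose aseq haD ha2 using hseq
  -- it is Cauchy
  have hone : Filter.Tendsto (fun n : ℕ => 1 / ((n:ℝ) + 1)) Filter.atTop (nhds 0) :=
    tendsto_one_div_add_atTop_nhds_zero_nat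
  have hcauchy : CauchySeq (fun n => (aseq n).1) := by
    apply cauchySeq_of_le_tendsto_0 (fun N : ℕ => 2 / ((N:ℝ) + 1))
    · intro n m N hn hm
      have h1 := key (aseq n) (haD n) (aseq m) (haD m)
      have h2 := ha2 n
      have h3 := ha2 m
      have hnn : 1/((n:ℝ)+1) ≤ 1/((N:ℝ)+1) := by
        apply one_div_le_one_div_of_le (by positivity)
        have : (N:ℝ) ≤ n := Nat.cast_le.mpr hn
        linarith
      have hmm : 1/((m:ℝ)+1) ≤ 1/((N:ℝ)+1) := by
        apply one_div_le_one_div_of_le (by positivity)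
        have : (N:ℝ) ≤ m := Nat.cast_le.mpr hm
        linarith
      rw [dist_eq_norm]
      have : 2 / ((N:ℝ) + 1) = 1/((N:ℝ)+1) + 1/((N:ℝ)+1) := by ring
      rw [this]
      linarith
    · have : (fun N : ℕ => 2 / ((N:ℝ) + 1)) = fun N : ℕ => 2 * (1 / ((N:ℝ) + 1)) := by
        funext N; ring
      rw [this]
      simpa using hone.const_mul 2
  obtain ⟨ylim, hy⟩ := cauchySeq_tendsto_of_complete hcauchy
  -- (ylim, t) is an upper bound of D
  have hub2 : ∀ a ∈ D, OUle a (ylim, t) := by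
    intro a ha
    show ‖ylim - a.1‖ ≤ t - a.2
    have htend : Filter.Tendsto (fun n => ‖(aseq n).1 - a.1‖ - 1/((n:ℝ)+1))
        Filter.atTop (nhds (‖ylim - a.1‖ - 0)) :=
      (((hy.sub_const a.1).norm).sub hone)
    rw [sub_zero] at htend
    apply le_of_tendsto' htend
    intro n
    have h1 := key (aseq n) (haD n) a ha
    have h2 := ha2 n
    linarith
  have hst : ‖ylim - s.1‖ ≤ t - s.2 := hlub (ylim, t) hub2
  have h0 : (0:ℝ) ≤ ‖ylim - s.1‖ := norm_nonneg _
  have hteq : t = s.2 := le_antisymm hts (by linarith)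
  -- conclusions
  refine ⟨hub1, ?_, ?_⟩
  · intro ε hε
    obtain ⟨x, hx, hx2⟩ := exists_lt_of_lt_csSup hTne (by linarith : t - ε < t)
    obtain ⟨a, ha, rfl⟩ := hx
    refine ⟨a, ha, ?_⟩
    intro b hb hab
    have h1 : (0:ℝ) ≤ ‖b.1 - a.1‖ := norm_nonneg _
    have h2 : ‖b.1 - a.1‖ ≤ b.2 - a.2 := hab
    have h3 := hub1 b hb
    have h4 : (0:ℝ) ≤ ‖s.1 - b.1‖ := norm_nonneg _
    rw [abs_of_nonneg (by linarith : (0:ℝ) ≤ s.2 - b.2)]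
    linarith
  · intro ε hε
    obtain ⟨x, hx, hx2⟩ := exists_lt_of_lt_csSup hTne (by linarith : t - ε < t)
    obtain ⟨a, ha, rfl⟩ := hx
    refine ⟨a, ha, ?_⟩
    intro b hb hab
    have h1 : (0:ℝ) ≤ ‖b.1 - a.1‖ := norm_nonneg _
    have h2 : ‖b.1 - a.1‖ ≤ b.2 - a.2 := hab
    have h3 := hub1 b hb
    linarith
end
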